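/- arXiv:1803.03351 — 2 statements merged into one kernel-verified Lean document; each statement's English description precedes it below -/
import Mathlib

section
/- Let p be a prime, A ⊆ F_p finite with 0 ∉ A, and define ν(t,α,β) as the number of 6-tuples (a₁₁, a₁₂, a₂₁, b₁₁, b₁₂, b₂₁) ∈ A^6 with a₁₁b₁₁ + a₁₂b₂₁ = t, (b₁₂t + a₁₂)/b₁₁ = α, (a₂₁t + b₂₁)/a₁₁ = β. Let R(A) be the set of matrices in SL_2(F_p) whose entries a₁₁, a₁₂, a₂₁ lie in A. Then (|A|^6 − |A|^5)² ≤ |R(A)·R(A)| · Σ_{t≠0, α, β} ν(t,α,β)². -/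
/-!
A tuple counted by `ν(t, α, β)` with `t ≠ 0` encodes a product `M N` of two matrices of `R(A)`:
since `M N` has determinant `1` and top-left entry `t ≠ 0`, it is the matrix
`[[t, α], [β, (1 + αβ)/t]]`, so the support of `ν` on `t ≠ 0` injects into `R(A)·R(A)`.
The tuples with `t = 0` number at most `|A|^5`, because `b₁₁` is then determined by the other
entries. Hence `Σ_{t ≠ 0} ν ≥ |A|^6 - |A|^5`, and Cauchy–Schwarz on the support of `ν` concludes.
-/

open Finset

/-- The number of 6-tuples `(a₁₁, a₁₂, a₂₁, b₁₁, b₁₂, b₂₁) ∈ A^6` satisfying the system. -/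
def nu {p : ℕ} [Fact p.Prime] (A : Finset (ZMod p)) (t α β : ZMod p) : ℕ :=
  ((A ×ˢ A ×ˢ A ×ˢ A ×ˢ A ×ˢ A).filter
    (fun x =>
      x.1 * x.2.2.2.1 + x.2.1 * x.2.2.2.2.2 = t ∧
      (x.2.2.2.2.1 * t + x.2.1) / x.2.2.2.1 = α ∧
      (x.2.2.1 * t + x.2.2.2.2.2) / x.1 = β)).card

lemma sq_sum_le_card_filter_ne_zero_mul_sum_sq {ι : Type*} (s : Finset ι) (f : ι → ℕ) :
    (∑ i ∈ s, f i) ^ 2 ≤ #{i ∈ s | f i ≠ 0} * ∑ i ∈ s, f i ^ 2 :=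
  calc (∑ i ∈ s, f i) ^ 2 = (∑ i ∈ s with f i ≠ 0, f i) ^ 2 := by rw [sum_filter_ne_zero]
    _ ≤ #{i ∈ s | f i ≠ 0} * ∑ i ∈ s with f i ≠ 0, f i ^ 2 := sq_sum_le_card_mul_sum_sq
    _ ≤ #{i ∈ s | f i ≠ 0} * ∑ i ∈ s, f i ^ 2 := by
      gcongr
      exact filter_subset _ _

section SL2

variable {K : Type*} [Field K]

/-- The completion to a matrix of determinant `1` when `a ≠ 0`. -/
def sl2OfEntries (a b c : K) : Matrix (Fin 2) (Fin 2) K :=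
  !![a, b; c, (1 + b * c) / a]

lemma det_sl2OfEntries {a : K} (b c : K) (ha : a ≠ 0) : (sl2OfEntries a b c).det = 1 := by
  rw [sl2OfEntries, Matrix.det_fin_two_of]
  field_simp
  ring

lemma eq_sl2OfEntries {M : Matrix (Fin 2) (Fin 2) K} (hM : M.det = 1) (h : M 0 0 ≠ 0) :
    M = sl2OfEntries (M 0 0) (M 0 1) (M 1 0) := by
  rw [Matrix.det_fin_two] at hM
  ext i j
  fin_cases i <;> fin_cases j <;> simp [sl2OfEntries]
  field_simp
  linear_combination hM

lemma sl2OfEntries_injective :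
    Function.Injective fun x : K × K × K => sl2OfEntries x.1 x.2.1 x.2.2 := by
  rintro ⟨a, b, c⟩ ⟨a', b', c'⟩ h
  have h00 := congrFun (congrFun h 0) 0
  have h01 := congrFun (congrFun h 0) 1
  have h10 := congrFun (congrFun h 1) 0
  simp_all [sl2OfEntries]

lemma sl2OfEntries_mul_sl2OfEntries {a d : K} (b c e g : K) (ha : a ≠ 0) (hd : d ≠ 0)
    (ht : a * d + b * g ≠ 0) :
    sl2OfEntries a b c * sl2OfEntries d e g =
      sl2OfEntries (a * d + b * g) ((e * (a * d + b * g) + b) / d)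
        ((c * (a * d + b * g) + g) / a) := by
  have hdet : (sl2OfEntries a b c * sl2OfEntries d e g).det = 1 := by
    rw [Matrix.det_mul, det_sl2OfEntries b c ha, det_sl2OfEntries e g hd, one_mul]
  rw [eq_sl2OfEntries hdet (by simpa [sl2OfEntries, Matrix.mul_apply] using ht)]
  have h01 : a * e + b * ((1 + e * g) / d) = (e * (a * d + b * g) + b) / d := by
    field_simp
    ring
  have h10 : c * d + (1 + b * c) / a * g = (c * (a * d + b * g) + g) / a := by
    field_simp
    ring
  simp [sl2OfEntries, Matrix.mul_apply, h01, h10]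

end SL2

section RestrictedSL2

variable {K : Type*} [Field K] [Fintype K] [DecidableEq K]

/-- The set `R(A)` of the paper. -/
def sl2EntriesIn (A : Finset K) : Finset (Matrix (Fin 2) (Fin 2) K) :=
  univ.filter fun M => M.det = 1 ∧ M 0 0 ∈ A ∧ M 0 1 ∈ A ∧ M 1 0 ∈ A

lemma sl2OfEntries_mem_sl2EntriesIn {A : Finset K} (hA : (0 : K) ∉ A) {a b c : K} (ha : a ∈ A)
    (hb : b ∈ A) (hc : c ∈ A) : sl2OfEntries a b c ∈ sl2EntriesIn A :=
  mem_filter.2 ⟨mem_univ _, det_sl2OfEntries b c (ne_of_mem_of_not_mem ha hA), ha, hb, hc⟩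

end RestrictedSL2

section Nu

variable {p : ℕ} [Fact p.Prime] (A : Finset (ZMod p))

lemma sum_nu_eq_card_filter (t : ZMod p) :
    ∑ α, ∑ β, nu A t α β =
      #{x ∈ A ×ˢ A ×ˢ A ×ˢ A ×ˢ A ×ˢ A | x.1 * x.2.2.2.1 + x.2.1 * x.2.2.2.2.2 = t} := by
  rw [card_eq_sum_card_fiberwise (t := univ) (f := fun x =>
    ((x.2.2.2.2.1 * t + x.2.1) / x.2.2.2.1, (x.2.2.1 * t + x.2.2.2.2.2) / x.1))
    (fun _ _ => mem_univ _), ← univ_product_univ, sum_product]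
  simp only [nu, filter_filter, Prod.mk.injEq]

lemma sum_sum_sum_nu : ∑ t, ∑ α, ∑ β, nu A t α β = #A ^ 6 := by
  simp only [sum_nu_eq_card_filter]
  rw [← card_eq_sum_card_fiberwise (fun _ _ => mem_univ _)]
  simp only [card_product]
  ring

lemma sum_sum_nu_zero_le (hA : (0 : ZMod p) ∉ A) : ∑ α, ∑ β, nu A 0 α β ≤ #A ^ 5 := by
  rw [sum_nu_eq_card_filter]
  calc _ ≤ #(A ×ˢ A ×ˢ A ×ˢ A ×ˢ A) := by
        refine card_le_card_of_injOn (fun x => (x.1, x.2.1, x.2.2.1, x.2.2.2.2.1, x.2.2.2.2.2))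
          (fun x hx => ?_) ?_
        · simp only [mem_coe, mem_filter, mem_product] at hx
          simp only [coe_product, Set.mem_prod, mem_coe]
          tauto
        · rintro ⟨a, b, c, d, e, g⟩ hx ⟨a', b', c', d', e', g'⟩ hx' h
          simp only [mem_coe, mem_filter, mem_product, Prod.mk.injEq] at hx hx' h
          obtain ⟨rfl, rfl, rfl, rfl, rfl⟩ := h
          have ha : a ≠ 0 := ne_of_mem_of_not_mem hx.1.1 hA
          have hd : d = d' := mul_left_cancel₀ ha (by linear_combination hx.2 - hx'.2)
          rw [hd]
    _ = #A ^ 5 := by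
        simp only [card_product]
        ring

lemma card_pow_six_sub_card_pow_five_le_sum_nu (hA : (0 : ZMod p) ∉ A) :
    #A ^ 6 - #A ^ 5 ≤ ∑ t ∈ univ.erase 0, ∑ α, ∑ β, nu A t α β := by
  have := add_sum_erase univ (fun t => ∑ α, ∑ β, nu A t α β) (mem_univ 0)
  have := sum_sum_nu_zero_le A hA
  have := sum_sum_sum_nu A
  omega

lemma sl2OfEntries_mem_image₂_of_nu_ne_zero (hA : (0 : ZMod p) ∉ A) {t α β : ZMod p}
    (ht : t ≠ 0) (h : nu A t α β ≠ 0) :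
    sl2OfEntries t α β ∈ image₂ (· * ·) (sl2EntriesIn A) (sl2EntriesIn A) := by
  obtain ⟨⟨a, b, c, d, e, g⟩, hx⟩ := card_ne_zero.1 h
  simp only [mem_filter, mem_product] at hx
  obtain ⟨⟨ha, hb, hc, hd, he, hg⟩, rfl, rfl, rfl⟩ := hx
  exact mem_image₂.2 ⟨_, sl2OfEntries_mem_sl2EntriesIn hA ha hb hc,
    _, sl2OfEntries_mem_sl2EntriesIn hA hd he hg,
    sl2OfEntries_mul_sl2OfEntries b c e g (ne_of_mem_of_not_mem ha hA)
      (ne_of_mem_of_not_mem hd hA) ht⟩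

lemma card_filter_nu_ne_zero_le (hA : (0 : ZMod p) ∉ A) :
    #{y ∈ (univ.erase 0) ×ˢ univ ×ˢ univ | nu A y.1 y.2.1 y.2.2 ≠ 0} ≤
      #(image₂ (· * ·) (sl2EntriesIn A) (sl2EntriesIn A)) := by
  refine card_le_card_of_injOn _ (fun y hy => ?_) sl2OfEntries_injective.injOn
  simp only [mem_coe, mem_filter, mem_product, mem_erase] at hy
  exact sl2OfEntries_mem_image₂_of_nu_ne_zero A hA hy.1.1.1 hy.2

end Nu

theorem stmt_2 (p : ℕ) [Fact p.Prime] (A : Finset (ZMod p)) (hA : (0 : ZMod p) ∉ A) :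
    (A.card ^ 6 - A.card ^ 5) ^ 2 ≤
      (Finset.image₂ (· * ·)
          ((Finset.univ : Finset (Matrix (Fin 2) (Fin 2) (ZMod p))).filter
            (fun M => M.det = 1 ∧ M 0 0 ∈ A ∧ M 0 1 ∈ A ∧ M 1 0 ∈ A))
          ((Finset.univ : Finset (Matrix (Fin 2) (Fin 2) (ZMod p))).filter
            (fun M => M.det = 1 ∧ M 0 0 ∈ A ∧ M 0 1 ∈ A ∧ M 1 0 ∈ A))).card *
        ∑ t ∈ (Finset.univ : Finset (ZMod p)).erase 0, ∑ α : ZMod p, ∑ β : ZMod p,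
          nu A t α β ^ 2 := by
  have hsum (f : ZMod p → ZMod p → ZMod p → ℕ) :
      ∑ t ∈ univ.erase 0, ∑ α, ∑ β, f t α β =
        ∑ y ∈ (univ.erase 0) ×ˢ univ ×ˢ univ, f y.1 y.2.1 y.2.2 := by
    simp only [sum_product]
  calc (#A ^ 6 - #A ^ 5) ^ 2
      ≤ (∑ y ∈ (univ.erase 0) ×ˢ univ ×ˢ univ, nu A y.1 y.2.1 y.2.2) ^ 2 := by
        rw [← hsum (nu A)]
        gcongr
        exact card_pow_six_sub_card_pow_five_le_sum_nu A hA
    _ ≤ #{y ∈ (univ.erase 0) ×ˢ univ ×ˢ univ | nu A y.1 y.2.1 y.2.2 ≠ 0} *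
          ∑ y ∈ (univ.erase 0) ×ˢ univ ×ˢ univ, nu A y.1 y.2.1 y.2.2 ^ 2 :=
        sq_sum_le_card_filter_ne_zero_mul_sum_sq _ _
    _ ≤ #(image₂ (· * ·) (sl2EntriesIn A) (sl2EntriesIn A)) *
          ∑ t ∈ univ.erase 0, ∑ α, ∑ β, nu A t α β ^ 2 := by
        rw [hsum]
        gcongr
        exact card_filter_nu_ne_zero_le A hA
end

section
/- Let p be a prime and A ⊆ F_p finite. In the Heisenberg group H₂(F_p), the product set [A², A², A]·[A², A², A] has cardinality at least |A|^4 · |AA + AA + A + A|, where AA + AA + A + A = {a₁a₂ + a₃a₄ + a₅ + a₆ : aᵢ ∈ A}. -/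
open Finset Pointwise

/-- The Heisenberg matrix `[x, y, z]` of degree 2. -/
def heis {p : ℕ} (x₁ x₂ y₁ y₂ z : ZMod p) : Matrix (Fin 4) (Fin 4) (ZMod p) :=
  !![1, x₁, x₂, z; 0, 1, 0, y₁; 0, 0, 1, y₂; 0, 0, 0, 1]

lemma heis_mul {p : ℕ} (x₁ x₂ y₁ y₂ z x₁' x₂' y₁' y₂' z' : ZMod p) :
    heis x₁ x₂ y₁ y₂ z * heis x₁' x₂' y₁' y₂' z' =
      heis (x₁+x₁') (x₂+x₂') (y₁+y₁') (y₂+y₂') (z+z'+x₁*y₁'+x₂*y₂') := by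
  ext i j
  fin_cases i <;> fin_cases j <;>
    simp [heis, Matrix.mul_apply, Fin.sum_univ_four, Matrix.vecHead, Matrix.vecTail] <;> ring

lemma heis_inj {p : ℕ} {x₁ x₂ y₁ y₂ z x₁' x₂' y₁' y₂' z' : ZMod p}
    (h : heis x₁ x₂ y₁ y₂ z = heis x₁' x₂' y₁' y₂' z') :
    x₁ = x₁' ∧ x₂ = x₂' ∧ y₁ = y₁' ∧ y₂ = y₂' ∧ z = z' := by
  have h01 := congrFun (congrFun h 0) 1
  have h02 := congrFun (congrFun h 0) 2
  have h13 := congrFun (congrFun h 1) 3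
  have h23 := congrFun (congrFun h 2) 3
  have h03 := congrFun (congrFun h 0) 3
  simp [heis] at h01 h02 h13 h23 h03
  exact ⟨h01, h02, h13, h23, h03⟩

theorem stmt_10 (p : ℕ) [Fact p.Prime] (A : Finset (ZMod p)) :
    {m : Matrix (Fin 4) (Fin 4) (ZMod p) |
        ∃ x₁ ∈ A, ∃ x₂ ∈ A, ∃ y₁ ∈ A, ∃ y₂ ∈ A, ∃ z ∈ A,
        ∃ x₁' ∈ A, ∃ x₂' ∈ A, ∃ y₁' ∈ A, ∃ y₂' ∈ A, ∃ z' ∈ A,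
          m = heis x₁ x₂ y₁ y₂ z * heis x₁' x₂' y₁' y₂' z'}.ncard ≥
      A.card ^ 4 * (A * A + A * A + A + A).card := by
  classical
  set S := A * A + A * A + A + A with hS
  set T := {m : Matrix (Fin 4) (Fin 4) (ZMod p) |
        ∃ x₁ ∈ A, ∃ x₂ ∈ A, ∃ y₁ ∈ A, ∃ y₂ ∈ A, ∃ z ∈ A,
        ∃ x₁' ∈ A, ∃ x₂' ∈ A, ∃ y₁' ∈ A, ∃ y₂' ∈ A, ∃ z' ∈ A,
          m = heis x₁ x₂ y₁ y₂ z * heis x₁' x₂' y₁' y₂' z'} with hT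
  have hmem : ∀ w : ZMod p, ∃ a b c d e f : ZMod p,
      w ∈ S → a ∈ A ∧ b ∈ A ∧ c ∈ A ∧ d ∈ A ∧ e ∈ A ∧ f ∈ A ∧ a*b + c*d + e + f = w := by
    intro w
    by_cases hw : w ∈ S
    · rw [hS] at hw
      obtain ⟨t, ht, f, hf, rfl⟩ := Finset.mem_add.1 hw
      obtain ⟨s, hs, e, he, rfl⟩ := Finset.mem_add.1 ht
      obtain ⟨u, hu, v, hv, rfl⟩ := Finset.mem_add.1 hs
      obtain ⟨a, ha, b, hb, rfl⟩ := Finset.mem_mul.1 hu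
      obtain ⟨c, hc, d, hd, rfl⟩ := Finset.mem_mul.1 hv
      exact ⟨a, b, c, d, e, f, fun _ => ⟨ha, hb, hc, hd, he, hf, rfl⟩⟩
    · exact ⟨0, 0, 0, 0, 0, 0, fun h => absurd h hw⟩
  choose a b c d e f hwit using hmem
  set g : (ZMod p × ZMod p × ZMod p × ZMod p) × ZMod p → Matrix (Fin 4) (Fin 4) (ZMod p) :=
    fun q => heis (a q.2 + q.1.1) (c q.2 + q.1.2.1) (q.1.2.2.1 + b q.2) (q.1.2.2.2 + d q.2) q.2
    with hg
  have hsub : ↑((((A ×ˢ A ×ˢ A ×ˢ A) ×ˢ S)).image g) ⊆ T := by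
    intro m hm
    simp only [Finset.coe_image, Set.mem_image, Finset.mem_coe] at hm
    obtain ⟨⟨⟨u₁, u₂, u₃, u₄⟩, w⟩, hq, rfl⟩ := hm
    simp only [Finset.mem_product, Finset.mem_coe] at hq
    obtain ⟨⟨hu₁, hu₂, hu₃, hu₄⟩, hw⟩ := hq
    obtain ⟨ha, hb, hc, hd, he, hf, heq⟩ := hwit w hw
    refine ⟨a w, ha, c w, hc, u₃, hu₃, u₄, hu₄, e w, he,
      u₁, hu₁, u₂, hu₂, b w, hb, d w, hd, f w, hf, ?_⟩
    have h5 : e w + f w + a w * b w + c w * d w = w := by linear_combination heq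
    rw [heis_mul, h5]
  have hinj : Set.InjOn g ↑(((A ×ˢ A ×ˢ A ×ˢ A) ×ˢ S)) := by
    rintro ⟨⟨u₁, u₂, u₃, u₄⟩, w⟩ _ ⟨⟨v₁, v₂, v₃, v₄⟩, w'⟩ _ h
    obtain ⟨h1, h2, h3, h4, h5⟩ := heis_inj h
    simp only at h1 h2 h3 h4 h5
    subst h5
    simp only [Prod.mk.injEq]
    exact ⟨⟨add_left_cancel h1, add_left_cancel h2, add_right_cancel h3,
      add_right_cancel h4⟩, trivial⟩
  calc A.card ^ 4 * S.card
      = (((A ×ˢ A ×ˢ A ×ˢ A) ×ˢ S)).card := by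
        rw [Finset.card_product, Finset.card_product, Finset.card_product,
          Finset.card_product]; ring
    _ = ((((A ×ˢ A ×ˢ A ×ˢ A) ×ˢ S)).image g).card :=
        (Finset.card_image_of_injOn hinj).symm
    _ = (↑((((A ×ˢ A ×ˢ A ×ˢ A) ×ˢ S)).image g) : Set _).ncard :=
        (Set.ncard_coe_finset _).symm
    _ ≤ T.ncard := Set.ncard_le_ncard hsub (Set.toFinite T)
end
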